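/- Let N ≥ 1 and 0 ≤ d ≤ ⌊(N−1)/2⌋. For A ∈ Matrix (Fin N) (Fin N) ℂ let M_e denote the e×e lower-left corner submatrix of A (rows N−e+1,…,N, columns 1,…,e), and write Br(e; k,l) := Σ_{r=N−e+1}^{N} Σ_{s=1}^{e} adj(M_e)_{s̄,r̄} · π_{(r,s),(k,l)}(A) for the Poisson bracket {det M_e, A_{k,l}}. Then for all A and all indices k, l: det(M_d) · Br(N−d; k,l) = det(M_{N−d}) · Br(d; k,l). Consequently, wherever det M_d ≠ 0, the rational function det M_{N−d}/det M_d is a central element of the Poisson algebra: {det M_{N−d}/det M_d, A_{k,l}} = 0. -/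

import Mathlib

open Matrix

noncomputable section

/-- The sign of the difference of two indices, as a complex number
(`sgn : ℤ → ℤ` with `sgn 0 = 0`). -/
def fsgn {N : ℕ} (a b : Fin N) : ℂ := ((((a : ℕ) : ℤ) - ((b : ℕ) : ℤ)).sign : ℤ)

/-- The quadratic Poisson bivector components. -/
def pb {N : ℕ} (A : Matrix (Fin N) (Fin N) ℂ) (i j k l : Fin N) : ℂ :=
  (fsgn j l + fsgn i k) * A i l * A k j
    + (fsgn j k + 1) * A j l * A i k
    + (fsgn i l - 1) * A l j * A k i

/-- Global row index in `A` of the `r`-th row of the `e × e` lower-left corner minor. -/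
def cornerRow (N e : ℕ) (he : e ≤ N) (r : Fin e) : Fin N :=
  ⟨N - e + r.val, by have := r.isLt; omega⟩

/-- Global column index in `A` of the `s`-th column of the `e × e` lower-left corner minor. -/
def cornerCol (N e : ℕ) (he : e ≤ N) (s : Fin e) : Fin N :=
  ⟨s.val, by have := s.isLt; omega⟩

/-- The `e × e` lower-left corner submatrix `M_e` of `A` (for `e = 0` it is the empty
matrix, with `det M_0 = 1`). -/
def corner (N e : ℕ) (he : e ≤ N) (A : Matrix (Fin N) (Fin N) ℂ) :
    Matrix (Fin e) (Fin e) ℂ :=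
  fun r s => A (cornerRow N e he r) (cornerCol N e he s)

/-- `Br(e; k,l) = {det M_e, A_{k,l}}`, computed by the Leibniz rule via the cofactors
`adj(M_e)_{s̄,r̄} = ∂ det M_e/∂A_{r,s}` (for `e = 0` the empty sum gives `0`). -/
def brCorner (N e : ℕ) (he : e ≤ N) (A : Matrix (Fin N) (Fin N) ℂ) (k l : Fin N) : ℂ :=
  ∑ r : Fin e, ∑ s : Fin e,
    (corner N e he A).adjugate s r *
      pb A (cornerRow N e he r) (cornerCol N e he s) k l

/-!
Expanding `pb` and contracting with the cofactor identities `adj M * M = M * adj M = det M • 1`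
gives `{det M_e, A_{k,l}} = (w_e(k) + w_e(l)) * det M_e * A_{k,l}` with
`w_e(i) = cornerWeight N e i = [i < e] - [N - e ≤ i]`: a free index lying in the corner's column
(row) range makes the sum collapse onto a diagonal term where the sign `fsgn` vanishes, and
otherwise the sign is constant. Since `w_{N-e} = w_e`, both sides of the identity equal
`(w(k) + w(l)) * det M_d * det M_{N-d} * A_{k,l}`.
-/

namespace Matrix

variable {n R : Type*} [Fintype n] [DecidableEq n] [CommRing R]

theorem sum_sum_adjugate_mul_mul_apply (M : Matrix n n R) (c : n) (φ : n → R) :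
    ∑ r, ∑ s, M.adjugate s r * M r c * φ s = M.det * φ c := by
  rw [Finset.sum_comm]
  simp_rw [← Finset.sum_mul, ← mul_apply, adjugate_mul, smul_apply, one_apply]
  simp

theorem sum_sum_adjugate_mul_apply_mul (M : Matrix n n R) (c : n) (ψ : n → R) :
    ∑ r, ∑ s, M.adjugate s r * M c s * ψ r = M.det * ψ c := by
  simp_rw [mul_comm (M.adjugate _ _), ← Finset.sum_mul, ← mul_apply, mul_adjugate, smul_apply,
    one_apply]
  simp

end Matrix

lemma fsgn_self {N : ℕ} (a : Fin N) : fsgn a a = 0 := by simp [fsgn]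

lemma fsgn_of_lt {N : ℕ} {a b : Fin N} (h : a < b) : fsgn a b = -1 := by
  simp [fsgn, Int.sign_eq_neg_one_of_neg (show (a : ℤ) - b < 0 by omega)]

lemma fsgn_of_gt {N : ℕ} {a b : Fin N} (h : b < a) : fsgn a b = 1 := by
  simp [fsgn, Int.sign_eq_one_of_pos (show 0 < (a : ℤ) - b by omega)]

def cornerWeight (N e : ℕ) (i : Fin N) : ℂ :=
  (if i.val < e then 1 else 0) - (if N - e ≤ i.val then 1 else 0)

lemma cornerWeight_tsub {N e : ℕ} (he : e ≤ N) (i : Fin N) :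
    cornerWeight N (N - e) i = cornerWeight N e i := by
  simp only [cornerWeight, Nat.sub_sub_self he]
  split_ifs <;> first | ring1 | (exfalso; omega)

section Corner

variable {N e : ℕ} (he : e ≤ N) (A : Matrix (Fin N) (Fin N) ℂ)

lemma exists_cornerCol_eq {l : Fin N} (hl : l.val < e) : ∃ c, cornerCol N e he c = l :=
  ⟨⟨l, hl⟩, rfl⟩

lemma exists_cornerRow_eq {k : Fin N} (hk : N - e ≤ k.val) : ∃ c, cornerRow N e he c = k :=
  ⟨⟨k - (N - e), by omega⟩, Fin.ext (by simp [cornerRow]; omega)⟩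

lemma fsgn_cornerCol_of_le {l : Fin N} (hl : e ≤ l.val) (s : Fin e) :
    fsgn (cornerCol N e he s) l = -1 :=
  fsgn_of_lt (show s.val < l.val by omega)

lemma fsgn_cornerRow_of_lt {k : Fin N} (hk : k.val < N - e) (r : Fin e) :
    fsgn (cornerRow N e he r) k = 1 :=
  fsgn_of_gt (show k.val < N - e + r.val by omega)

lemma sum_sum_adjugate_corner_mul_col (c : Fin e) (φ : Fin e → ℂ) :
    ∑ r, ∑ s,
        (corner N e he A).adjugate s r * A (cornerRow N e he r) (cornerCol N e he c) * φ s
      = (corner N e he A).det * φ c :=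
  (corner N e he A).sum_sum_adjugate_mul_mul_apply c φ

lemma sum_sum_adjugate_corner_mul_row (c : Fin e) (ψ : Fin e → ℂ) :
    ∑ r, ∑ s,
        (corner N e he A).adjugate s r * A (cornerRow N e he c) (cornerCol N e he s) * ψ r
      = (corner N e he A).det * ψ c :=
  (corner N e he A).sum_sum_adjugate_mul_apply_mul c ψ

variable (k l : Fin N)

lemma sum_sum_adjugate_corner_mul_fsgn_add_fsgn :
    ∑ r, ∑ s, (corner N e he A).adjugate s r *
        ((fsgn (cornerCol N e he s) l + fsgn (cornerRow N e he r) k) *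
          A (cornerRow N e he r) l * A k (cornerCol N e he s))
      = ((if l.val < e then 1 else 0) - (if N - e ≤ k.val then 1 else 0))
          * (corner N e he A).det * A k l := by
  by_cases hl : l.val < e <;> by_cases hk : N - e ≤ k.val
  · obtain ⟨c, rfl⟩ := exists_cornerCol_eq he hl
    obtain ⟨c', rfl⟩ := exists_cornerRow_eq he hk
    calc _ = ∑ r, ∑ s, (corner N e he A).adjugate s r *
              A (cornerRow N e he r) (cornerCol N e he c) *
                (fsgn (cornerCol N e he s) (cornerCol N e he c) *
                  A (cornerRow N e he c') (cornerCol N e he s))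
          + ∑ r, ∑ s, (corner N e he A).adjugate s r *
              A (cornerRow N e he c') (cornerCol N e he s) *
                (fsgn (cornerRow N e he r) (cornerRow N e he c') *
                  A (cornerRow N e he r) (cornerCol N e he c)) := by
          simp only [← Finset.sum_add_distrib]
          exact Finset.sum_congr rfl fun r _ => Finset.sum_congr rfl fun s _ => by ring
      _ = _ := by
          rw [sum_sum_adjugate_corner_mul_col, sum_sum_adjugate_corner_mul_row, fsgn_self,
            fsgn_self, if_pos hl, if_pos hk]
          ring
  · obtain ⟨c, rfl⟩ := exists_cornerCol_eq he hl
    calc _ = ∑ r, ∑ s, (corner N e he A).adjugate s r *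
              A (cornerRow N e he r) (cornerCol N e he c) *
                ((fsgn (cornerCol N e he s) (cornerCol N e he c) + 1) * A k (cornerCol N e he s)) :=
          Finset.sum_congr rfl fun r _ => Finset.sum_congr rfl fun s _ => by
            rw [fsgn_cornerRow_of_lt he (not_le.mp hk)]; ring
      _ = _ := by
          rw [sum_sum_adjugate_corner_mul_col, fsgn_self, if_pos hl, if_neg hk]
          ring
  · obtain ⟨c, rfl⟩ := exists_cornerRow_eq he hk
    calc _ = ∑ r, ∑ s, (corner N e he A).adjugate s r *
              A (cornerRow N e he c) (cornerCol N e he s) *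
                ((fsgn (cornerRow N e he r) (cornerRow N e he c) - 1) * A (cornerRow N e he r) l) :=
          Finset.sum_congr rfl fun r _ => Finset.sum_congr rfl fun s _ => by
            rw [fsgn_cornerCol_of_le he (not_lt.mp hl)]; ring
      _ = _ := by
          rw [sum_sum_adjugate_corner_mul_row, fsgn_self, if_neg hl, if_pos hk]
          ring
  · rw [if_neg hl, if_neg hk]
    simp [fsgn_cornerRow_of_lt he (not_le.mp hk), fsgn_cornerCol_of_le he (not_lt.mp hl)]

lemma sum_sum_adjugate_corner_mul_fsgn_add_one :
    ∑ r, ∑ s, (corner N e he A).adjugate s r *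
        ((fsgn (cornerCol N e he s) k + 1) * A (cornerCol N e he s) l * A (cornerRow N e he r) k)
      = (if k.val < e then 1 else 0) * (corner N e he A).det * A k l := by
  by_cases hk : k.val < e
  · obtain ⟨c, rfl⟩ := exists_cornerCol_eq he hk
    calc _ = ∑ r, ∑ s, (corner N e he A).adjugate s r *
              A (cornerRow N e he r) (cornerCol N e he c) *
                ((fsgn (cornerCol N e he s) (cornerCol N e he c) + 1) * A (cornerCol N e he s) l) :=
          Finset.sum_congr rfl fun r _ => Finset.sum_congr rfl fun s _ => by ring
      _ = _ := by
          rw [sum_sum_adjugate_corner_mul_col, fsgn_self, if_pos hk]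
          ring
  · rw [if_neg hk]
    simp [fsgn_cornerCol_of_le he (not_lt.mp hk)]

lemma sum_sum_adjugate_corner_mul_fsgn_sub_one :
    ∑ r, ∑ s, (corner N e he A).adjugate s r *
        ((fsgn (cornerRow N e he r) l - 1) * A l (cornerCol N e he s) * A k (cornerRow N e he r))
      = -(if N - e ≤ l.val then 1 else 0) * (corner N e he A).det * A k l := by
  by_cases hl : N - e ≤ l.val
  · obtain ⟨c, rfl⟩ := exists_cornerRow_eq he hl
    calc _ = ∑ r, ∑ s, (corner N e he A).adjugate s r *
              A (cornerRow N e he c) (cornerCol N e he s) *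
                ((fsgn (cornerRow N e he r) (cornerRow N e he c) - 1) * A k (cornerRow N e he r)) :=
          Finset.sum_congr rfl fun r _ => Finset.sum_congr rfl fun s _ => by ring
      _ = _ := by
          rw [sum_sum_adjugate_corner_mul_row, fsgn_self, if_pos hl]
          ring
  · rw [if_neg hl]
    simp [fsgn_cornerRow_of_lt he (not_le.mp hl)]

theorem brCorner_eq_cornerWeight_mul :
    brCorner N e he A k l
      = (cornerWeight N e k + cornerWeight N e l) * (corner N e he A).det * A k l := by
  have hsplit : brCorner N e he A k l
      = ∑ r, ∑ s, (corner N e he A).adjugate s r *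
          ((fsgn (cornerCol N e he s) l + fsgn (cornerRow N e he r) k) *
            A (cornerRow N e he r) l * A k (cornerCol N e he s))
        + ∑ r, ∑ s, (corner N e he A).adjugate s r *
          ((fsgn (cornerCol N e he s) k + 1) * A (cornerCol N e he s) l * A (cornerRow N e he r) k)
        + ∑ r, ∑ s, (corner N e he A).adjugate s r *
          ((fsgn (cornerRow N e he r) l - 1) * A l (cornerCol N e he s) *
            A k (cornerRow N e he r)) := by
    simp only [brCorner, pb, ← Finset.sum_add_distrib, mul_add]
  rw [hsplit, sum_sum_adjugate_corner_mul_fsgn_add_fsgn, sum_sum_adjugate_corner_mul_fsgn_add_one,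
    sum_sum_adjugate_corner_mul_fsgn_sub_one, cornerWeight, cornerWeight]
  ring

end Corner

/-- `det(M_d)·{det M_{N−d}, A_{k,l}} = det(M_{N−d})·{det M_d, A_{k,l}}`;
consequently, wherever `det M_d ≠ 0`, the rational function `det M_{N−d}/det M_d`
is a central element of the Poisson algebra. -/
theorem rational_central_elements (N d : ℕ) (hd : d ≤ (N - 1) / 2)
    (A : Matrix (Fin N) (Fin N) ℂ) (k l : Fin N) :
    (corner N d (by omega) A).det * brCorner N (N - d) (by omega) A k l
      = (corner N (N - d) (by omega) A).det * brCorner N d (by omega) A k l := by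
  rw [brCorner_eq_cornerWeight_mul, brCorner_eq_cornerWeight_mul, cornerWeight_tsub (by omega),
    cornerWeight_tsub (by omega)]
  ring
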